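/- Let x(t+1) be defined implicitly by g(x(t+1)) = f(x(t), u(t)) with |u(t)| ≤ κ, where |∂f/∂u(x,u)| ≤ 1 and |∂f/∂x(x,u)| ≤ θ|g'(x)| for all x ∈ ℝ, u ∈ [−κ,κ], with θ ∈ [0,1). Then the set Ω(θ) = {x : | |f(x,ν) − g(x)| − |ν| | ≤ κ(1+θ)/(1−θ) for all ν ∈ [−κ,κ]} is invariant under the dynamics. -/

import Mathlib

/-!
Write `Ω ζ = {y | ∀ |ν| ≤ κ, ||f(y,ν) − g(y)| − |ν|| ≤ ζ}` (`stableSet f g κ ζ`). If `g(b) = f(a, μ)` with `a ∈ Ω ζ`, then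
`|f(b,ν) − g(b)| ≤ |f(b,ν) − f(b,μ)| + |f(b,μ) − f(a,μ)| ≤ |ν − μ| + θ |g(b) − g(a)|
  ≤ |ν| + κ + θ (ζ + κ)`,
using the mean value theorem in `u` and, in `x`, the comparison of `f(·,μ)` with `θ g`, which is
where the monotonicity of `g` enters. Hence `b ∈ Ω ζ` as soon as `κ + θ (ζ + κ) ≤ ζ`, and
`ζ = κ (1 + θ) / (1 − θ)` is the fixed point of `ζ ↦ κ + θ (ζ + κ)`.
-/

lemma abs_sub_le_sub_of_abs_deriv_le_deriv {φ h : ℝ → ℝ} (hφ : Differentiable ℝ φ)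
    (hh : Differentiable ℝ h) (hle : ∀ z, |deriv φ z| ≤ deriv h z) {a b : ℝ} (hab : a ≤ b) :
    |φ b - φ a| ≤ h b - h a := by
  have hsub : Monotone (h - φ) := monotone_of_deriv_nonneg (hh.sub hφ) fun z => by
    rw [deriv_sub (hh z) (hφ z)]
    linarith [le_abs_self (deriv φ z), hle z]
  have hadd : Monotone (h + φ) := monotone_of_deriv_nonneg (hh.add hφ) fun z => by
    rw [deriv_add (hh z) (hφ z)]
    linarith [neg_abs_le (deriv φ z), hle z]
  have h₁ := hsub hab
  have h₂ := hadd hab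
  simp only [Pi.sub_apply, Pi.add_apply] at h₁ h₂
  rw [abs_le]
  constructor <;> linarith

lemma abs_sub_le_mul_abs_sub_of_abs_deriv_le {φ g : ℝ → ℝ} {θ : ℝ} (hφ : Differentiable ℝ φ)
    (hg : Differentiable ℝ g) (hmono : Monotone g ∨ Antitone g)
    (hle : ∀ z, |deriv φ z| ≤ θ * |deriv g z|) (a b : ℝ) :
    |φ b - φ a| ≤ θ * |g b - g a| := by
  wlog hab : a ≤ b generalizing a b
  · rw [abs_sub_comm, abs_sub_comm (g b)]
    exact this b a (le_of_not_ge hab)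
  rcases hmono with hm | ha
  · have key := abs_sub_le_sub_of_abs_deriv_le_deriv hφ (hg.const_mul θ)
      (fun z => by rw [deriv_const_mul θ (hg z), ← abs_of_nonneg hm.deriv_nonneg]; exact hle z) hab
    rwa [abs_of_nonneg (sub_nonneg.2 (hm hab)), mul_sub]
  · have key := abs_sub_le_sub_of_abs_deriv_le_deriv hφ (hg.const_mul (-θ))
      (fun z => by
        rw [deriv_const_mul (-θ) (hg z), neg_mul, ← mul_neg, ← abs_of_nonpos ha.deriv_nonpos]
        exact hle z) hab
    rw [abs_of_nonpos (sub_nonpos.2 (ha hab))]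
    linarith

lemma abs_sub_le_abs_sub_of_abs_deriv_le_one {φ : ℝ → ℝ} {κ : ℝ} (hφ : Differentiable ℝ φ)
    (hle : ∀ u, |u| ≤ κ → |deriv φ u| ≤ 1) {ν μ : ℝ} (hν : |ν| ≤ κ) (hμ : |μ| ≤ κ) :
    |φ ν - φ μ| ≤ |ν - μ| := by
  have h := (convex_Icc (-κ) κ).norm_image_sub_le_of_norm_deriv_le (fun z _ => hφ z)
    (fun z hz => hle z (abs_le.2 hz)) (abs_le.1 hμ) (abs_le.1 hν)
  simpa only [Real.norm_eq_abs, one_mul] using h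

def stableSet (f : ℝ → ℝ → ℝ) (g : ℝ → ℝ) (κ ζ : ℝ) : Set ℝ :=
  {y | ∀ ν : ℝ, |ν| ≤ κ → |(|f y ν - g y| - |ν|)| ≤ ζ}

lemma mem_stableSet_of_step {f : ℝ → ℝ → ℝ} {g : ℝ → ℝ} {θ κ ζ : ℝ} (hθ : 0 ≤ θ)
    (hζ : κ + θ * (ζ + κ) ≤ ζ)
    (hx : ∀ ν, |ν| ≤ κ → ∀ a b, |f b ν - f a ν| ≤ θ * |g b - g a|)
    (hu : ∀ y ν μ, |ν| ≤ κ → |μ| ≤ κ → |f y ν - f y μ| ≤ |ν - μ|)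
    {a b μ : ℝ} (ha : a ∈ stableSet f g κ ζ) (hμ : |μ| ≤ κ) (hstep : g b = f a μ) :
    b ∈ stableSet f g κ ζ := by
  intro ν hν
  have hζa : |f a μ - g a| ≤ ζ + κ := by linarith [(abs_le.1 (ha μ hμ)).2]
  have hb : |f b ν - g b| ≤ |ν| + ζ :=
    calc |f b ν - g b| ≤ |f b ν - f b μ| + |f b μ - f a μ| := by
          rw [hstep]; exact abs_sub_le _ _ _
      _ ≤ |ν - μ| + θ * |g b - g a| := add_le_add (hu b ν μ hν hμ) (hx μ hμ a b)
      _ ≤ |ν| + κ + θ * (ζ + κ) := by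
          rw [hstep]
          gcongr
          exact (abs_sub _ _).trans (by linarith)
      _ ≤ |ν| + ζ := by linarith
  have hκζ : κ ≤ ζ := by linarith [mul_nonneg hθ ((abs_nonneg _).trans hζa)]
  rw [abs_le]
  constructor <;> linarith [abs_nonneg (f b ν - g b)]

theorem stmt_10_general (g : ℝ → ℝ) (f : ℝ → ℝ → ℝ) (θ κ : ℝ)
    (hg : ContDiff ℝ 1 g) (hgmono : Monotone g ∨ Antitone g)
    (hf : ContDiff ℝ 1 (fun p : ℝ × ℝ => f p.1 p.2))
    (hθ0 : 0 ≤ θ) (hθ1 : θ < 1)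
    (hdu : ∀ x u : ℝ, |u| ≤ κ → |deriv (fun u' => f x u') u| ≤ 1)
    (hdx : ∀ x u : ℝ, |u| ≤ κ → |deriv (fun x' => f x' u) x| ≤ θ * |deriv g x|)
    (x u : ℕ → ℝ) (hu : ∀ t, |u t| ≤ κ)
    (htraj : ∀ t, g (x (t + 1)) = f (x t) (u t)) :
    ∀ t, x t ∈ {y : ℝ | ∀ ν : ℝ, |ν| ≤ κ →
          |(|f y ν - g y| - |ν|)| ≤ κ * (1 + θ) / (1 - θ)} →
      x (t + 1) ∈ {y : ℝ | ∀ ν : ℝ, |ν| ≤ κ →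
          |(|f y ν - g y| - |ν|)| ≤ κ * (1 + θ) / (1 - θ)} := by
  intro t hxt
  have hfd : Differentiable ℝ (fun p : ℝ × ℝ => f p.1 p.2) := hf.differentiable one_ne_zero
  have hgd : Differentiable ℝ g := hg.differentiable one_ne_zero
  have hfixed : κ + θ * (κ * (1 + θ) / (1 - θ) + κ) = κ * (1 + θ) / (1 - θ) := by
    field_simp [(sub_pos.2 hθ1).ne']
    ring
  refine mem_stableSet_of_step hθ0 hfixed.le (fun ν hν a b => ?_) (fun y ν μ hν hμ => ?_)
    hxt (hu t) (htraj t)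
  · exact abs_sub_le_mul_abs_sub_of_abs_deriv_le
      (hfd.comp (differentiable_id.prodMk (differentiable_const ν))) hgd hgmono
      (fun z => hdx z ν hν) a b
  · exact abs_sub_le_abs_sub_of_abs_deriv_le_one
      (hfd.comp ((differentiable_const y).prodMk differentiable_id)) (hdu y) hν hμ

/-- for the perturbed implicit system `g(x(t+1)) = f(x(t), u(t))`
with `|u(t)| ≤ κ`, `|∂f/∂u| ≤ 1` and `|∂f/∂x| ≤ θ|g'|`, `θ ∈ [0,1)`, the set
`Ω(θ) = {x : ||f(x,ν) − g(x)| − |ν|| ≤ κ(1+θ)/(1−θ) ∀|ν| ≤ κ}` is invariant. -/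
theorem stmt_10 (g : ℝ → ℝ) (f : ℝ → ℝ → ℝ) (θ κ : ℝ)
    (hg : ContDiff ℝ 1 g) (hgmono : Monotone g ∨ Antitone g)
    (hf : ContDiff ℝ 1 (fun p : ℝ × ℝ => f p.1 p.2))
    (hκ : 0 < κ) (hθ0 : 0 ≤ θ) (hθ1 : θ < 1)
    (hdu : ∀ x u : ℝ, |u| ≤ κ → |deriv (fun u' => f x u') u| ≤ 1)
    (hdx : ∀ x u : ℝ, |u| ≤ κ → |deriv (fun x' => f x' u) x| ≤ θ * |deriv g x|)
    (x u : ℕ → ℝ) (hu : ∀ t, |u t| ≤ κ)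
    (htraj : ∀ t, g (x (t + 1)) = f (x t) (u t)) :
    ∀ t, x t ∈ {y : ℝ | ∀ ν : ℝ, |ν| ≤ κ →
          |(|f y ν - g y| - |ν|)| ≤ κ * (1 + θ) / (1 - θ)} →
      x (t + 1) ∈ {y : ℝ | ∀ ν : ℝ, |ν| ≤ κ →
          |(|f y ν - g y| - |ν|)| ≤ κ * (1 + θ) / (1 - θ)} :=
  stmt_10_general g f θ κ hg hgmono hf hθ0 hθ1 hdu hdx x u hu htraj
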